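/- With X = Y ∪ Z as above (Y ⊂ {x_0=...=x_{l-1}=0}, Z ⊂ {x_{l+1}=...=x_n=0}, meeting exactly at the point p with only x_l nonzero), let Σ_{X,m} be the set of degree-m monomials in k[x_0,...,x_n] not in in_≺(I_X)_m, let Σ_{Y,m} be the degree-m monomials in k[x_l,...,x_n] not in in_≺(I_Y ∩ k[x_l,...,x_n])_m, and let Σ_{Z,m} be the degree-m monomials in k[x_0,...,x_l] not in in_≺(I_Z ∩ k[x_0,...,x_l])_m. Then Σ_{X,m} = Σ_{Y,m} ∪ Σ_{Z,m} and Σ_{Y,m} ∩ Σ_{Z,m} = {x_l^m}. -/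

import Mathlib

open MvPolynomial Finset
open scoped MonomialOrder Pointwise

/-- The leading exponent (exponent of the leading monomial) of a polynomial
with respect to a monomial order. -/
noncomputable def leadExp {k : Type*} [Field k] {N : ℕ}
    (mo : MonomialOrder (Fin N)) (f : MvPolynomial (Fin N) k) :
    Fin N →₀ ℕ :=
  mo.toSyn.symm (f.support.sup mo.toSyn)

/-- The ideal of `k[x_0,…,x_{N-1}]` generated by the leading monomials of the elements of
`I ∩ k[x_i : i ∈ s]`, i.e. of the nonzero elements of `I` all of whose variables lie in `s`.
This is the ideal generated by the initial ideal (computed in the smaller polynomial ring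
`k[x_i : i ∈ s]` with the restricted monomial order) of the intersection of `I` with that
smaller polynomial ring. -/
noncomputable def restInitialIdeal {k : Type*} [Field k] {N : ℕ} (mo : MonomialOrder (Fin N))
    (I : Ideal (MvPolynomial (Fin N) k)) (s : Set (Fin N)) :
    Ideal (MvPolynomial (Fin N) k) :=
  Ideal.span { g | ∃ f ∈ I, f ≠ 0 ∧ ↑f.vars ⊆ s ∧ g = monomial (leadExp mo f) (1 : k) }

/-- The initial ideal of `I` with respect to a monomial order: the ideal generated by the
leading monomials of the nonzero elements of `I`. -/
noncomputable def initialIdeal {k : Type*} [Field k] {N : ℕ} (mo : MonomialOrder (Fin N))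
    (I : Ideal (MvPolynomial (Fin N) k)) : Ideal (MvPolynomial (Fin N) k) :=
  restInitialIdeal mo I Set.univ

/-- The coordinate point whose coordinates all vanish except the `c`-th, which equals `1`. -/
def coordPt (k : Type*) [Field k] {N : ℕ} (c : ℕ) : Fin N → k :=
  fun j => if (j : ℕ) = c then 1 else 0

/-- The set of degree-`m` standard monomials (given by their exponent vectors): degree-`m`
monomials in the variables `x_i, i ∈ s`, not lying in the ideal `J`. -/
def stdMonomials {k : Type*} [Field k] {N : ℕ} (J : Ideal (MvPolynomial (Fin N) k))
    (s : Set (Fin N)) (m : ℕ) : Set (Fin N →₀ ℕ) :=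
  {α | (∑ i, α i) = m ∧ ↑α.support ⊆ s ∧ monomial α (1 : k) ∉ J}

section Aux

variable {k : Type*} [Field k] {N : ℕ} (mo : MonomialOrder (Fin N))

lemma leadExp_mem_support {f : MvPolynomial (Fin N) k} (hf : f ≠ 0) :
    leadExp mo f ∈ f.support := by
  have hne : f.support.Nonempty :=
    Finset.nonempty_iff_ne_empty.2 fun h => hf (support_eq_empty.mp h)
  obtain ⟨a, ha, hb⟩ := Finset.exists_mem_eq_sup f.support hne mo.toSyn
  have : leadExp mo f = a := by rw [leadExp, hb]; exact mo.toSyn.symm_apply_apply a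
  rwa [this]

lemma le_leadExp {f : MvPolynomial (Fin N) k} {γ : Fin N →₀ ℕ} (h : γ ∈ f.support) :
    mo.toSyn γ ≤ mo.toSyn (leadExp mo f) := by
  rw [leadExp, AddEquiv.apply_symm_apply]
  exact Finset.le_sup h

lemma leadExp_eq_of {f : MvPolynomial (Fin N) k} {γ : Fin N →₀ ℕ} (h1 : γ ∈ f.support)
    (h2 : ∀ δ ∈ f.support, mo.toSyn δ ≤ mo.toSyn γ) : leadExp mo f = γ := by
  have hf : f ≠ 0 := fun h => by simp [h] at h1
  exact mo.toSyn.injective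
    (le_antisymm (h2 _ (leadExp_mem_support mo hf)) (le_leadExp mo h1))

lemma leadExp_monomial {γ : Fin N →₀ ℕ} {a : k} (ha : a ≠ 0) :
    leadExp mo (monomial γ a) = γ := by
  apply leadExp_eq_of mo
  · rw [mem_support_iff, coeff_monomial, if_pos rfl]; exact ha
  · intro δ hδ
    classical
    have : δ = γ := by simpa [support_monomial, ha] using hδ
    rw [this]

lemma monomial_mem_restInitialIdeal_iff {I : Ideal (MvPolynomial (Fin N) k)}
    {s : Set (Fin N)} {α : Fin N →₀ ℕ} :
    monomial α (1 : k) ∈ restInitialIdeal mo I s ↔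
      ∃ f ∈ I, f ≠ 0 ∧ ↑f.vars ⊆ s ∧ leadExp mo f ≤ α := by
  classical
  have hset : { g | ∃ f ∈ I, f ≠ 0 ∧ ↑f.vars ⊆ s ∧ g = monomial (leadExp mo f) (1 : k) }
      = (fun β => monomial β (1 : k)) ''
        { β | ∃ f ∈ I, f ≠ 0 ∧ ↑f.vars ⊆ s ∧ β = leadExp mo f } := by
    ext g
    constructor
    · rintro ⟨f, hf, h0, hv, rfl⟩
      exact ⟨leadExp mo f, ⟨f, hf, h0, hv, rfl⟩, rfl⟩
    · rintro ⟨β, ⟨f, hf, h0, hv, rfl⟩, rfl⟩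
      exact ⟨f, hf, h0, hv, rfl⟩
  rw [restInitialIdeal, hset, mem_ideal_span_monomial_image]
  have hsupp : (monomial α (1 : k)).support = {α} := by
    simp [support_monomial]
  constructor
  · intro h
    obtain ⟨β, ⟨f, hf, h0, hv, rfl⟩, hle⟩ :=
      h α (by rw [hsupp]; exact Finset.mem_singleton_self _)
    exact ⟨f, hf, h0, hv, hle⟩
  · rintro ⟨f, hf, h0, hv, hle⟩ xi hxi
    rw [hsupp, Finset.mem_singleton] at hxi
    subst hxi
    exact ⟨leadExp mo f, ⟨f, hf, h0, hv, rfl⟩, hle⟩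

lemma hc_support_subset (d : ℕ) (f : MvPolynomial (Fin N) k) :
    (homogeneousComponent d f).support ⊆ f.support := by
  intro γ hγ
  rw [mem_support_iff] at hγ ⊢
  rw [coeff_homogeneousComponent] at hγ
  by_cases h : γ.degree = d
  · simpa [h] using hγ
  · simp [h] at hγ

lemma hc_degree_of_mem_support {d : ℕ} {f : MvPolynomial (Fin N) k} {γ : Fin N →₀ ℕ}
    (hγ : γ ∈ (homogeneousComponent d f).support) : γ.degree = d := by
  by_contra h
  rw [mem_support_iff, coeff_homogeneousComponent, if_neg h] at hγ
  exact hγ rfl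

lemma degree_eq_sum_univ (γ : Fin N →₀ ℕ) : γ.degree = ∑ i, γ i := by
  rw [Finsupp.degree]
  exact Finset.sum_subset (Finset.subset_univ _)
    (fun i _ hi => Finsupp.notMem_support_iff.mp hi)

lemma degree_single' (c : Fin N) (d : ℕ) : (Finsupp.single c d).degree = d := by
  by_cases hd : d = 0
  · subst hd; simp [Finsupp.degree]
  · rw [Finsupp.degree_apply, Finsupp.support_single_ne_zero _ hd, Finset.sum_singleton,
      Finsupp.single_eq_same]

lemma eq_single_of_support_subset {γ : Fin N →₀ ℕ} {c : Fin N} (h : γ.support ⊆ {c}) :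
    γ = Finsupp.single c γ.degree := by
  rcases Finset.subset_singleton_iff.mp h with h0 | h0
  · have h1 : γ = 0 := Finsupp.support_eq_empty.mp h0
    rw [h1]
    simp [Finsupp.degree, h1]
  · have hcd : γ.degree = γ c := by rw [Finsupp.degree_apply, h0, Finset.sum_singleton]
    rw [hcd]
    exact Finsupp.eq_single_iff.mpr ⟨h, rfl⟩

lemma prod_coordPt_pow (c : Fin N) (γ : Fin N →₀ ℕ) :
    (∏ i ∈ γ.support, coordPt k (c : ℕ) i ^ γ i) = if γ.support ⊆ {c} then 1 else 0 := by
  classical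
  by_cases h : γ.support ⊆ {c}
  · rw [if_pos h]
    apply Finset.prod_eq_one
    intro i hi
    have : i = c := Finset.mem_singleton.mp (h hi)
    subst this
    simp [coordPt]
  · rw [if_neg h]
    obtain ⟨i, hi, hic⟩ : ∃ i ∈ γ.support, i ≠ c := by
      by_contra hh
      push_neg at hh
      exact h fun i hi => Finset.mem_singleton.mpr (hh i hi)
    apply Finset.prod_eq_zero hi
    have hγi : γ i ≠ 0 := Finsupp.mem_support_iff.mp hi
    have hci : coordPt k (c : ℕ) i = 0 := by
      have : (i : ℕ) ≠ (c : ℕ) := fun hv => hic (Fin.ext hv)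
      simp [coordPt, this]
    rw [hci, zero_pow hγi]

lemma eval_coordPt_hc (c : Fin N) (d : ℕ) (f : MvPolynomial (Fin N) k) :
    eval (coordPt k (c : ℕ)) (homogeneousComponent d f) =
      coeff (Finsupp.single c d) f := by
  classical
  rw [eval_eq]
  have key : ∀ γ ∈ (homogeneousComponent d f).support,
      coeff γ (homogeneousComponent d f) * ∏ i ∈ γ.support, coordPt k (c : ℕ) i ^ γ i
        = if γ = Finsupp.single c d then coeff γ f else 0 := by
    intro γ hγ
    have hdeg : γ.degree = d := hc_degree_of_mem_support hγ
    rw [prod_coordPt_pow]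
    by_cases h : γ.support ⊆ {c}
    · have hγeq : γ = Finsupp.single c d := hdeg ▸ eq_single_of_support_subset h
      rw [if_pos hγeq, if_pos h, mul_one, coeff_homogeneousComponent, if_pos hdeg]
    · have hne : γ ≠ Finsupp.single c d := fun he => h (by
        rw [he]; exact Finsupp.support_single_subset)
      rw [if_neg hne, if_neg h, mul_zero]
  rw [Finset.sum_congr rfl key, Finset.sum_ite_eq' _ _ _]
  by_cases hmem : Finsupp.single c d ∈ (homogeneousComponent d f).support
  · rw [if_pos hmem]
  · rw [if_neg hmem]
    rw [mem_support_iff, coeff_homogeneousComponent, if_pos (degree_single' c d),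
      not_not] at hmem
    exact hmem.symm

/-- The key lifting lemma: a nonzero element of `I` with variables in `s` has the same leading
exponent as some nonzero element of `I ⊓ J`. -/
lemma lift_lemma {I J : Ideal (MvPolynomial (Fin N) k)} {s t : Set (Fin N)} {c : Fin N}
    (hIhom : ∀ f ∈ I, ∀ d : ℕ, homogeneousComponent d f ∈ I)
    (hIp : ∀ f ∈ I, eval (coordPt k (c : ℕ)) f = 0)
    (hJsub : ∀ j : Fin N, j ∈ t → (X j : MvPolynomial (Fin N) k) ∈ J)
    (hst : ∀ j, j ∈ s → j ≠ c → j ∈ t)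
    {f : MvPolynomial (Fin N) k} (hf : f ∈ I) (hf0 : f ≠ 0) (hv : ↑f.vars ⊆ s) :
    ∃ g, g ∈ I ∧ g ∈ J ∧ g ≠ 0 ∧ leadExp mo g = leadExp mo f := by
  classical
  set d := (leadExp mo f).degree with hd
  set g := homogeneousComponent d f with hg
  have hcoeff : coeff (leadExp mo f) g = coeff (leadExp mo f) f := by
    rw [hg, coeff_homogeneousComponent, if_pos rfl]
  have hmem : leadExp mo f ∈ g.support := by
    rw [mem_support_iff, hcoeff, ← mem_support_iff]
    exact leadExp_mem_support mo hf0
  have hg0 : g ≠ 0 := fun h => by simp [h] at hmem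
  have hlead : leadExp mo g = leadExp mo f :=
    leadExp_eq_of mo hmem fun δ hδ => le_leadExp mo (hc_support_subset d f hδ)
  have hgI : g ∈ I := hIhom f hf d
  have hzero : coeff (Finsupp.single c d) g = 0 := by
    have h1 := hIp g hgI
    rw [hg, eval_coordPt_hc] at h1
    rw [hg, coeff_homogeneousComponent, if_pos (degree_single' c d), h1]
  have hgspan : g ∈ Ideal.span (X '' t : Set (MvPolynomial (Fin N) k)) := by
    rw [mem_ideal_span_X_image]
    intro γ hγ
    have hγd : γ.degree = d := hc_degree_of_mem_support hγ
    have hγs : ↑γ.support ⊆ s := fun i hi =>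
      hv ((mem_vars i).mpr ⟨γ, hc_support_subset d f hγ, hi⟩)
    have hne : γ ≠ Finsupp.single c d := fun he =>
      (mem_support_iff.mp hγ) (he ▸ hzero)
    by_contra hno
    push_neg at hno
    have hsub : γ.support ⊆ {c} := by
      intro i hi
      rcases eq_or_ne i c with rfl | hic
      · exact Finset.mem_singleton_self _
      · exact absurd (Finsupp.mem_support_iff.mp hi)
          (by simpa using hno i (hst i (hγs hi) hic))
    exact hne (hγd ▸ eq_single_of_support_subset hsub)
  exact ⟨g, hgI,
    Ideal.span_le.mpr (by rintro x ⟨j, hj, rfl⟩; exact hJsub j hj) hgspan, hg0, hlead⟩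

/-- Truncation: keep only the monomials of `g` supported in `s`. -/
lemma exists_truncation (s : Set (Fin N)) {g : MvPolynomial (Fin N) k} (hg : g ≠ 0)
    (hlead : ↑(leadExp mo g).support ⊆ s) :
    ∃ f : MvPolynomial (Fin N) k, f ≠ 0 ∧ ↑f.vars ⊆ s ∧ leadExp mo f = leadExp mo g ∧
      g - f ∈ Ideal.span (X '' sᶜ : Set (MvPolynomial (Fin N) k)) := by
  classical
  set T : Finset (Fin N →₀ ℕ) :=
    g.support.filter (fun γ => (↑γ.support : Set (Fin N)) ⊆ s) with hT
  set f : MvPolynomial (Fin N) k := ∑ γ ∈ T, monomial γ (coeff γ g) with hf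
  have hcoeff : ∀ δ, coeff δ f = if δ ∈ T then coeff δ g else 0 := by
    intro δ
    rw [hf, coeff_sum]
    rw [Finset.sum_congr rfl fun γ _ => coeff_monomial δ γ (coeff γ g)]
    exact Finset.sum_ite_eq' _ _ _
  have hTm : leadExp mo g ∈ T := by
    rw [hT, Finset.mem_filter]
    exact ⟨leadExp_mem_support mo hg, hlead⟩
  have hmemf : leadExp mo g ∈ f.support := by
    rw [mem_support_iff, hcoeff, if_pos hTm, ← mem_support_iff]
    exact leadExp_mem_support mo hg
  have hf0 : f ≠ 0 := fun h => by simp [h] at hmemf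
  have hsupf : f.support ⊆ g.support := by
    intro δ hδ
    rw [mem_support_iff, hcoeff] at hδ
    by_cases h : δ ∈ T
    · exact Finset.mem_of_mem_filter δ (hT ▸ h)
    · simp [h] at hδ
  have hleadf : leadExp mo f = leadExp mo g :=
    leadExp_eq_of mo hmemf fun δ hδ => le_leadExp mo (hsupf hδ)
  have hvars : ↑f.vars ⊆ s := by
    intro i hi
    obtain ⟨δ, hδ, hiδ⟩ := (mem_vars i).mp hi
    rw [mem_support_iff, hcoeff] at hδ
    by_cases h : δ ∈ T
    · rw [hT, Finset.mem_filter] at h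
      exact h.2 hiδ
    · simp [h] at hδ
  refine ⟨f, hf0, hvars, hleadf, ?_⟩
  rw [mem_ideal_span_X_image]
  intro δ hδ
  rw [mem_support_iff, coeff_sub, hcoeff] at hδ
  by_cases h : δ ∈ T
  · rw [if_pos h, sub_self] at hδ
    exact absurd rfl hδ
  · rw [if_neg h, sub_zero] at hδ
    rw [hT, Finset.mem_filter, not_and] at h
    have h2 := h (mem_support_iff.mpr hδ)
    rw [Set.not_subset] at h2
    obtain ⟨i, hi, his⟩ := h2
    exact ⟨i, his, Finsupp.mem_support_iff.mp hi⟩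

/-- A pure power of the coordinate variable `x_c` does not lie in the restricted initial ideal
of a homogeneous ideal vanishing at the coordinate point. -/
lemma pure_power_not_mem {I : Ideal (MvPolynomial (Fin N) k)} {s : Set (Fin N)} {c : Fin N}
    (m : ℕ)
    (hIhom : ∀ f ∈ I, ∀ d : ℕ, homogeneousComponent d f ∈ I)
    (hIp : ∀ f ∈ I, eval (coordPt k (c : ℕ)) f = 0) :
    monomial (Finsupp.single c m) (1 : k) ∉ restInitialIdeal mo I s := by
  intro hmem
  rw [monomial_mem_restInitialIdeal_iff] at hmem
  obtain ⟨f, hfI, hf0, -, hle⟩ := hmem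
  have hsub : (leadExp mo f).support ⊆ {c} := by
    intro i hi
    rcases eq_or_ne i c with rfl | hic
    · exact Finset.mem_singleton_self _
    · have h1 := Finsupp.le_def.mp hle i
      rw [Finsupp.single_eq_of_ne' (Ne.symm hic)] at h1
      exact absurd (Nat.le_zero.mp h1) (Finsupp.mem_support_iff.mp hi)
  have heq : leadExp mo f = Finsupp.single c (leadExp mo f).degree :=
    eq_single_of_support_subset hsub
  have hzero : coeff (Finsupp.single c (leadExp mo f).degree) f = 0 := by
    have h1 := hIp _ (hIhom f hfI (leadExp mo f).degree)
    rwa [eval_coordPt_hc] at h1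
  have hne : coeff (leadExp mo f) f ≠ 0 :=
    mem_support_iff.mp (leadExp_mem_support mo hf0)
  rw [heq] at hne
  exact hne hzero

end Aux

/-- with `X = Y ∪ Z` as in the two-block setting, the degree-`m` standard
monomials satisfy `Σ_{X,m} = Σ_{Y,m} ∪ Σ_{Z,m}` and `Σ_{Y,m} ∩ Σ_{Z,m} = {x_l^m}`. -/
theorem standard_monomials_decomposition {k : Type*} [Field k] (n l : ℕ) (hl : l ≤ n)
    (IY IZ : Ideal (MvPolynomial (Fin (n + 1)) k))
    (hIYhom : ∀ f ∈ IY, ∀ d : ℕ, homogeneousComponent d f ∈ IY)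
    (hIZhom : ∀ f ∈ IZ, ∀ d : ℕ, homogeneousComponent d f ∈ IZ)
    (hYsub : ∀ j : Fin (n + 1), (j : ℕ) < l → (X j : MvPolynomial (Fin (n + 1)) k) ∈ IY)
    (hZsub : ∀ j : Fin (n + 1), l < (j : ℕ) → (X j : MvPolynomial (Fin (n + 1)) k) ∈ IZ)
    (hYp : ∀ f ∈ IY, eval (coordPt k l) f = 0)
    (hZp : ∀ f ∈ IZ, eval (coordPt k l) f = 0)
    (mo : MonomialOrder (Fin (n + 1))) (m : ℕ) :
    stdMonomials (initialIdeal mo (IY ⊓ IZ)) Set.univ m =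
      stdMonomials (restInitialIdeal mo IY {j : Fin (n + 1) | l ≤ (j : ℕ)})
        {j : Fin (n + 1) | l ≤ (j : ℕ)} m ∪
      stdMonomials (restInitialIdeal mo IZ {j : Fin (n + 1) | (j : ℕ) ≤ l})
        {j : Fin (n + 1) | (j : ℕ) ≤ l} m ∧
    stdMonomials (restInitialIdeal mo IY {j : Fin (n + 1) | l ≤ (j : ℕ)})
        {j : Fin (n + 1) | l ≤ (j : ℕ)} m ∩
      stdMonomials (restInitialIdeal mo IZ {j : Fin (n + 1) | (j : ℕ) ≤ l})
        {j : Fin (n + 1) | (j : ℕ) ≤ l} m =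
      {Finsupp.single (⟨l, by omega⟩ : Fin (n + 1)) m} := by
  classical
  set c : Fin (n + 1) := ⟨l, by omega⟩ with hc
  have hcl : (c : ℕ) = l := rfl
  have hYp' : ∀ f ∈ IY, eval (coordPt k (c : ℕ)) f = 0 := by rw [hcl]; exact hYp
  have hZp' : ∀ f ∈ IZ, eval (coordPt k (c : ℕ)) f = 0 := by rw [hcl]; exact hZp
  constructor
  · -- Part 1
    ext α
    simp only [stdMonomials, Set.mem_setOf_eq, Set.mem_union]
    constructor
    · rintro ⟨hdeg, -, hnot⟩
      have hmix : ¬ ((∃ i ∈ α.support, (i : ℕ) < l) ∧ (∃ j ∈ α.support, l < (j : ℕ))) := by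
        rintro ⟨⟨i, hi, hil⟩, ⟨j, hj, hjl⟩⟩
        apply hnot
        rw [initialIdeal, monomial_mem_restInitialIdeal_iff]
        have hij : i ≠ j := fun h => by rw [h] at hil; omega
        have hXX : (X i * X j : MvPolynomial (Fin (n + 1)) k)
            = monomial (Finsupp.single i 1 + Finsupp.single j 1) 1 := by
          show monomial (Finsupp.single i 1) 1 * monomial (Finsupp.single j 1) 1 = _
          rw [monomial_mul, one_mul]
        refine ⟨X i * X j, ?_, ?_, by simp, ?_⟩
        · exact Submodule.mem_inf.mpr
            ⟨Ideal.mul_mem_right _ _ (hYsub i hil), Ideal.mul_mem_left _ _ (hZsub j hjl)⟩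
        · rw [hXX, Ne, monomial_eq_zero]
          exact one_ne_zero
        · rw [hXX, leadExp_monomial mo one_ne_zero, Finsupp.le_def]
          intro t
          rw [Finsupp.add_apply]
          rcases eq_or_ne t i with rfl | hti
          · rw [Finsupp.single_eq_same, Finsupp.single_eq_of_ne' (Ne.symm hij)]
            have := Finsupp.mem_support_iff.mp hi
            omega
          · rcases eq_or_ne t j with rfl | htj
            · rw [Finsupp.single_eq_same, Finsupp.single_eq_of_ne' hij]
              have := Finsupp.mem_support_iff.mp hj
              omega
            · rw [Finsupp.single_eq_of_ne' (Ne.symm hti),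
                Finsupp.single_eq_of_ne' (Ne.symm htj)]
              omega
      by_cases hcase : ∃ j ∈ α.support, l < (j : ℕ)
      · left
        have hsup : ↑α.support ⊆ {j : Fin (n + 1) | l ≤ (j : ℕ)} := by
          intro i hi
          rw [Set.mem_setOf_eq]
          by_contra hlt
          exact hmix ⟨⟨i, Finset.mem_coe.mp hi, by omega⟩, hcase⟩
        refine ⟨hdeg, hsup, ?_⟩
        intro hmem
        rw [monomial_mem_restInitialIdeal_iff] at hmem
        obtain ⟨f, hfI, hf0, hv, hle⟩ := hmem
        obtain ⟨g, hgY, hgZ, hg0, hgl⟩ :=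
          lift_lemma (t := {j : Fin (n + 1) | l < (j : ℕ)}) mo hIYhom hYp'
            (fun j hj => hZsub j hj)
            (fun j hj hjc => by
              simp only [Set.mem_setOf_eq] at hj ⊢
              have hne : (j : ℕ) ≠ l := fun hh => hjc (Fin.ext (by rw [hh, hcl]))
              omega) hfI hf0 hv
        apply hnot
        rw [initialIdeal, monomial_mem_restInitialIdeal_iff]
        exact ⟨g, Submodule.mem_inf.mpr ⟨hgY, hgZ⟩, hg0, by simp,
          by rw [hgl]; exact hle⟩
      · right
        have hsup : ↑α.support ⊆ {j : Fin (n + 1) | (j : ℕ) ≤ l} := by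
          intro i hi
          rw [Set.mem_setOf_eq]
          push_neg at hcase
          exact hcase i (Finset.mem_coe.mp hi)
        refine ⟨hdeg, hsup, ?_⟩
        intro hmem
        rw [monomial_mem_restInitialIdeal_iff] at hmem
        obtain ⟨f, hfI, hf0, hv, hle⟩ := hmem
        obtain ⟨g, hgZ, hgY, hg0, hgl⟩ :=
          lift_lemma (t := {j : Fin (n + 1) | (j : ℕ) < l}) mo hIZhom hZp'
            (fun j hj => hYsub j hj)
            (fun j hj hjc => by
              simp only [Set.mem_setOf_eq] at hj ⊢
              have hne : (j : ℕ) ≠ l := fun hh => hjc (Fin.ext (by rw [hh, hcl]))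
              omega) hfI hf0 hv
        apply hnot
        rw [initialIdeal, monomial_mem_restInitialIdeal_iff]
        exact ⟨g, Submodule.mem_inf.mpr ⟨hgY, hgZ⟩, hg0, by simp,
          by rw [hgl]; exact hle⟩
    · rintro (⟨hdeg, hsup, hnot⟩ | ⟨hdeg, hsup, hnot⟩)
      · refine ⟨hdeg, by simp, ?_⟩
        intro hmem
        rw [initialIdeal, monomial_mem_restInitialIdeal_iff] at hmem
        obtain ⟨g, hgI, hg0, -, hle⟩ := hmem
        have hleadsup : ↑(leadExp mo g).support ⊆ {j : Fin (n + 1) | l ≤ (j : ℕ)} := by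
          intro i hi
          apply hsup
          rw [Finset.mem_coe, Finsupp.mem_support_iff] at hi ⊢
          have := Finsupp.le_def.mp hle i
          omega
        obtain ⟨f, hf0, hfv, hfl, hdiff⟩ := exists_truncation mo _ hg0 hleadsup
        have hfY : f ∈ IY := by
          have hgY : g ∈ IY := (Submodule.mem_inf.mp hgI).1
          have hspan : Ideal.span
              (X '' {j : Fin (n + 1) | l ≤ (j : ℕ)}ᶜ : Set (MvPolynomial (Fin (n + 1)) k))
              ≤ IY := by
            rw [Ideal.span_le]
            rintro x ⟨j, hj, rfl⟩
            apply hYsub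
            simpa [not_le] using hj
          have h2 : g - f ∈ IY := hspan hdiff
          have h3 : g - (g - f) ∈ IY := Ideal.sub_mem _ hgY h2
          rwa [sub_sub_cancel] at h3
        exact hnot ((monomial_mem_restInitialIdeal_iff mo).mpr
          ⟨f, hfY, hf0, hfv, by rw [hfl]; exact hle⟩)
      · refine ⟨hdeg, by simp, ?_⟩
        intro hmem
        rw [initialIdeal, monomial_mem_restInitialIdeal_iff] at hmem
        obtain ⟨g, hgI, hg0, -, hle⟩ := hmem
        have hleadsup : ↑(leadExp mo g).support ⊆ {j : Fin (n + 1) | (j : ℕ) ≤ l} := by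
          intro i hi
          apply hsup
          rw [Finset.mem_coe, Finsupp.mem_support_iff] at hi ⊢
          have := Finsupp.le_def.mp hle i
          omega
        obtain ⟨f, hf0, hfv, hfl, hdiff⟩ := exists_truncation mo _ hg0 hleadsup
        have hfZ : f ∈ IZ := by
          have hgZ : g ∈ IZ := (Submodule.mem_inf.mp hgI).2
          have hspan : Ideal.span
              (X '' {j : Fin (n + 1) | (j : ℕ) ≤ l}ᶜ : Set (MvPolynomial (Fin (n + 1)) k))
              ≤ IZ := by
            rw [Ideal.span_le]
            rintro x ⟨j, hj, rfl⟩
            apply hZsub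
            simpa [not_le] using hj
          have h2 : g - f ∈ IZ := hspan hdiff
          have h3 : g - (g - f) ∈ IZ := Ideal.sub_mem _ hgZ h2
          rwa [sub_sub_cancel] at h3
        exact hnot ((monomial_mem_restInitialIdeal_iff mo).mpr
          ⟨f, hfZ, hf0, hfv, by rw [hfl]; exact hle⟩)
  · -- Part 2
    ext α
    simp only [stdMonomials, Set.mem_inter_iff, Set.mem_setOf_eq, Set.mem_singleton_iff]
    constructor
    · rintro ⟨⟨hdeg, hsupY, -⟩, ⟨-, hsupZ, -⟩⟩
      have hsub : α.support ⊆ {c} := by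
        intro i hi
        have h1 := hsupY (Finset.mem_coe.mpr hi)
        have h2 := hsupZ (Finset.mem_coe.mpr hi)
        rw [Set.mem_setOf_eq] at h1 h2
        exact Finset.mem_singleton.mpr (Fin.ext (by omega))
      have h3 := eq_single_of_support_subset hsub
      rw [degree_eq_sum_univ, hdeg] at h3
      exact h3
    · rintro rfl
      have hdeg : (∑ i, Finsupp.single c m i) = m := by
        rw [← degree_eq_sum_univ, degree_single']
      have hsupY : ↑(Finsupp.single c m).support ⊆ {j : Fin (n + 1) | l ≤ (j : ℕ)} := by
        intro i hi
        have h1 := Finsupp.support_single_subset (Finset.mem_coe.mp hi)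
        rw [Finset.mem_singleton] at h1
        rw [h1, Set.mem_setOf_eq, hcl]
      have hsupZ : ↑(Finsupp.single c m).support ⊆ {j : Fin (n + 1) | (j : ℕ) ≤ l} := by
        intro i hi
        have h1 := Finsupp.support_single_subset (Finset.mem_coe.mp hi)
        rw [Finset.mem_singleton] at h1
        rw [h1, Set.mem_setOf_eq, hcl]
      exact ⟨⟨hdeg, hsupY, pure_power_not_mem mo m hIYhom hYp'⟩,
        ⟨hdeg, hsupZ, pure_power_not_mem mo m hIZhom hZp'⟩⟩
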